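/- arXiv:1202.5531 — 2 statements merged into one kernel-verified Lean document; each statement's English description precedes it below -/
import Mathlib

section
/- Let ℓ ∈ ℕ, let A : Fin ℓ × box(N) → ℂ be a multi-matrix, let b₁, b₂ : box(2N) → ℂ, and let B₁, B₂ be the corresponding catalectic multi-matrices, B_s(i,j) = b_s(i+j). Then A B₁ Aᵗ = A B₂ Aᵗ if and only if Σ_{β ∈ box(2N)} b₁(β) z(β) = Σ_{β ∈ box(2N)} b₂(β) z(β) for every z in the ℂ-linear span of { u ⋆ v : u, v in the row space of A }; that is, A B Aᵗ depends only on, and determines, the restriction of the linear functional defined by b to the subspace μ(im Aᵗ · im Aᵗ). -/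
/-- `Box N` is the set of multi-indices `i ∈ ℕ₀^r` with `i_k ≤ N_k` for all `k`. -/
def Box {r : ℕ} (N : Fin r → ℕ) : Type := ∀ k, Fin (N k + 1)

instance {r : ℕ} (N : Fin r → ℕ) : Fintype (Box N) := by unfold Box; infer_instance
instance {r : ℕ} (N : Fin r → ℕ) : DecidableEq (Box N) := by unfold Box; infer_instance

/-- Addition `box(N) × box(N) → box(2N)` of multi-indices. -/
def boxAdd {r : ℕ} {N : Fin r → ℕ} (i j : Box N) : Box (fun k => 2 * N k) :=
  fun k => ⟨(i k : ℕ) + (j k : ℕ), by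
    have h1 := (i k).isLt
    have h2 := (j k).isLt
    show (i k : ℕ) + (j k : ℕ) < 2 * N k + 1
    omega⟩

/-- The convolution (polynomial multiplication) of two multi-vectors
`f, g : box(N) → ℂ`: `(f ⋆ g)(β) = ∑_{α + α' = β} f(α) g(α')`. -/
noncomputable def conv {r : ℕ} {N : Fin r → ℕ} (f g : Box N → ℂ) :
    Box (fun k => 2 * N k) → ℂ :=
  fun β => ∑ α : Box N, ∑ α' : Box N, if boxAdd α α' = β then f α * g α' else 0

/-! Grouping the double sum by `β = i + j` gives `(A B Aᵗ)(k,l) = ∑ β, b(β) (a_k ⋆ a_l)(β)`. As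
`⋆` is bilinear, the span of the products `u ⋆ v` of vectors of the row space is already spanned by
the products `a_k ⋆ a_l` of rows, and two linear functionals agree on a span iff they agree on its
generators. -/

theorem Submodule.span_setOf_eq_apply₂_span_span {R M N P : Type*} [CommSemiring R]
    [AddCommMonoid M] [AddCommMonoid N] [AddCommMonoid P] [Module R M] [Module R N] [Module R P]
    (f : M →ₗ[R] N →ₗ[R] P) (s : Set M) (t : Set N) :
    span R {p | ∃ m ∈ span R s, ∃ n ∈ span R t, p = f m n} = span R (Set.image2 (f · ·) s t) := by
  rw [← map₂_span_span, map₂_eq_span_image2]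
  congr 1
  ext p
  simp [Set.mem_image2, eq_comm]

section
variable {r : ℕ} {N : Fin r → ℕ}

lemma conv_add_left (u u' v : Box N → ℂ) : conv (u + u') v = conv u v + conv u' v := by
  ext β
  simp only [conv, Pi.add_apply, add_mul, ite_add_zero, Finset.sum_add_distrib]

lemma conv_add_right (u v v' : Box N → ℂ) : conv u (v + v') = conv u v + conv u v' := by
  ext β
  simp only [conv, Pi.add_apply, mul_add, ite_add_zero, Finset.sum_add_distrib]

lemma conv_smul_left (c : ℂ) (u v : Box N → ℂ) : conv (c • u) v = c • conv u v := by
  ext β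
  simp only [conv, Pi.smul_apply, smul_eq_mul, Finset.mul_sum, mul_ite, mul_zero, mul_assoc]

lemma conv_smul_right (c : ℂ) (u v : Box N → ℂ) : conv u (c • v) = c • conv u v := by
  ext β
  simp only [conv, Pi.smul_apply, smul_eq_mul, Finset.mul_sum, mul_ite, mul_zero, mul_left_comm]

noncomputable def convBilin :
    (Box N → ℂ) →ₗ[ℂ] (Box N → ℂ) →ₗ[ℂ] (Box (fun k => 2 * N k) → ℂ) :=
  LinearMap.mk₂ ℂ conv conv_add_left conv_smul_left conv_add_right conv_smul_right

lemma dotProduct_conv (b : Box (fun k => 2 * N k) → ℂ) (u v : Box N → ℂ) :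
    b ⬝ᵥ conv u v = ∑ i : Box N, ∑ j : Box N, u i * b (boxAdd i j) * v j := by
  simp only [dotProduct, conv, Finset.mul_sum, mul_ite, mul_zero]
  rw [Finset.sum_comm]
  refine Finset.sum_congr rfl fun i _ => ?_
  rw [Finset.sum_comm]
  refine Finset.sum_congr rfl fun j _ => ?_
  rw [Finset.sum_ite_eq, if_pos (Finset.mem_univ _)]
  ring

end

/-- For catalectic multi-matrices `B₁, B₂` given by
`b₁, b₂ : box(2N) → ℂ`, one has `A B₁ Aᵗ = A B₂ Aᵗ` if and only if the linear
functionals defined by `b₁` and `b₂` agree on the ℂ-linear span of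
`{u ⋆ v : u, v ∈ row space of A}`; i.e. `A B Aᵗ` depends only on, and determines,
the restriction of the functional `b` to `μ(im Aᵗ · im Aᵗ)`. -/
theorem ABAt_eq_iff_functionals_agree {r : ℕ} (N : Fin r → ℕ) (ℓ : ℕ)
    (A : Fin ℓ × Box N → ℂ) (b₁ b₂ : Box (fun k => 2 * N k) → ℂ) :
    (∀ k l : Fin ℓ,
        ∑ i : Box N, ∑ j : Box N, A (k, i) * b₁ (boxAdd i j) * A (l, j) =
        ∑ i : Box N, ∑ j : Box N, A (k, i) * b₂ (boxAdd i j) * A (l, j)) ↔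
      (∀ z ∈ Submodule.span ℂ
          {h : Box (fun k => 2 * N k) → ℂ |
            ∃ u ∈ Submodule.span ℂ (Set.range fun k : Fin ℓ => fun i : Box N => A (k, i)),
            ∃ v ∈ Submodule.span ℂ (Set.range fun k : Fin ℓ => fun i : Box N => A (k, i)),
              h = conv u v},
        ∑ β : Box (fun k => 2 * N k), b₁ β * z β =
        ∑ β : Box (fun k => 2 * N k), b₂ β * z β) := by
  have span_conv := Submodule.span_setOf_eq_apply₂_span_span (convBilin (N := N))
    (Set.range fun k : Fin ℓ => fun i : Box N => A (k, i))
    (Set.range fun k : Fin ℓ => fun i : Box N => A (k, i))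
  simp only [convBilin, LinearMap.mk₂_apply] at span_conv
  rw [span_conv]
  change _ ↔ Set.EqOn (dotProductBilin ℂ ℂ b₁) (dotProductBilin ℂ ℂ b₂) _
  rw [LinearMap.eqOn_span_iff, Set.EqOn, Set.forall_mem_image2]
  simp only [Set.forall_mem_range, dotProductBilin_apply_apply, dotProduct_conv]
end

section
/- Let ℓ ∈ ℕ, let A : Fin ℓ × box(N) → ℂ be a multi-matrix whose row space U is nonzero, let b : box(2N) → ℂ, and let B be the catalectic multi-matrix with B(i,j) = b(i+j). Then the ℓ × ℓ matrix A B Aᵗ has rank at most 1 if and only if there exists a linear subspace W ⊆ U of codimension 1 in U such that Σ_{β ∈ box(2N)} b(β) (w ⋆ u)(β) = 0 for all w ∈ W and all u ∈ U. -/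
open Module Submodule

section FinrankMap

variable {K V V' : Type*} [Field K] [AddCommGroup V] [Module K V] [AddCommGroup V'] [Module K V']

theorem Submodule.exists_le_finrank_eq (p : Submodule K V) [FiniteDimensional K p] {d : ℕ}
    (hd : d ≤ finrank K p) :
    ∃ W ≤ p, finrank K W = d := by
  let e := Module.finBasis K p
  refine ⟨span K (Set.range fun i : Fin d => (e (Fin.castLE hd i) : V)), ?_, ?_⟩
  · rw [span_le]
    rintro _ ⟨i, rfl⟩
    exact (e _).2
  · rw [finrank_span_eq_card, Fintype.card_fin]
    exact (e.linearIndependent.comp _ (Fin.castLE_injective hd)).map' p.subtype p.ker_subtype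

theorem Submodule.finrank_map_add_finrank_inf_ker (f : V →ₗ[K] V') (U : Submodule K V)
    [FiniteDimensional K U] :
    finrank K (U.map f) + finrank K ↥(U ⊓ LinearMap.ker f) = finrank K U := by
  rw [← (f.domRestrict U).finrank_range_add_finrank_ker, LinearMap.range_domRestrict,
    LinearMap.ker_domRestrict, ← finrank_map_subtype_eq, map_comap_subtype]

theorem Submodule.finrank_map_le_one_iff (f : V →ₗ[K] V') {U : Submodule K V}
    [FiniteDimensional K U] (hU : U ≠ ⊥) :
    finrank K (U.map f) ≤ 1 ↔
      ∃ W ≤ U, finrank K W + 1 = finrank K U ∧ W ≤ LinearMap.ker f := by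
  have hrank := finrank_map_add_finrank_inf_ker f U
  constructor
  · intro h
    have hpos := one_le_finrank_iff.mpr hU
    obtain ⟨W, hW, hWrank⟩ := (U ⊓ LinearMap.ker f).exists_le_finrank_eq
      (d := finrank K U - 1) (by omega)
    exact ⟨W, hW.trans inf_le_left, by omega, hW.trans inf_le_right⟩
  · rintro ⟨W, hWU, hWrank, hWf⟩
    have := finrank_mono (le_inf hWU hWf)
    omega

end FinrankMap

theorem Matrix.rank_of_bilin_apply_eq_finrank_map {K M N ι κ : Type*} [Field K] [AddCommGroup M]
    [Module K M] [AddCommGroup N] [Module K N] [Finite ι] [Fintype κ]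
    (Φ : M →ₗ[K] N →ₗ[K] K) (v : ι → M) (w : κ → N) :
    (Matrix.of fun k l => Φ (v k) (w l)).rank =
      finrank K ((span K (Set.range v)).map (Φ.compl₂ (span K (Set.range w)).subtype)) := by
  set S := span K (Set.range w)
  let eval : (S →ₗ[K] K) →ₗ[K] κ → K :=
    LinearMap.pi fun l => LinearMap.applyₗ (⟨w l, subset_span ⟨l, rfl⟩⟩ : S)
  have heval : Function.Injective eval := by
    rw [← LinearMap.ker_eq_bot, eq_bot_iff]
    intro g hg
    refine LinearMap.ext_on span_span_coe_preimage fun x ⟨l, hl⟩ => ?_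
    obtain rfl : x = ⟨w l, subset_span ⟨l, rfl⟩⟩ := Subtype.ext hl.symm
    exact congrFun hg l
  have hrows : Set.range (Matrix.of fun k l => Φ (v k) (w l)).row =
      eval '' (Φ.compl₂ S.subtype '' Set.range v) := by
    rw [← Set.range_comp, ← Set.range_comp]
    rfl
  rw [rank_eq_finrank_span_row, hrows, span_image, span_image]
  exact (equivMapOfInjective eval heval _).finrank_eq.symm

theorem LinearMap.le_ker_compl₂_subtype_iff {K M N P : Type*} [CommRing K] [AddCommGroup M]
    [Module K M] [AddCommGroup N] [Module K N] [AddCommGroup P] [Module K P]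
    (Φ : M →ₗ[K] N →ₗ[K] P) (W : Submodule K M) (U : Submodule K N) :
    W ≤ LinearMap.ker (Φ.compl₂ U.subtype) ↔ ∀ w ∈ W, ∀ u ∈ U, Φ w u = 0 := by
  simp only [SetLike.le_def, LinearMap.mem_ker, LinearMap.ext_iff, Subtype.forall,
    LinearMap.compl₂_apply, Submodule.subtype_apply, LinearMap.zero_apply]

section Catalecticant

variable {r : ℕ} {N : Fin r → ℕ}

def catalecticant (b : Box (fun k => 2 * N k) → ℂ) : Matrix (Box N) (Box N) ℂ :=
  Matrix.of fun i j => b (boxAdd i j)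

theorem toLinearMap₂'_catalecticant_apply (b : Box (fun k => 2 * N k) → ℂ)
    (f g : Box N → ℂ) :
    Matrix.toLinearMap₂' ℂ (catalecticant b) f g =
      ∑ i : Box N, ∑ j : Box N, f i * b (boxAdd i j) * g j := by
  simp only [Matrix.toLinearMap₂'_apply', dotProduct, Matrix.mulVec, catalecticant,
    Matrix.of_apply, Finset.mul_sum, mul_assoc]

theorem sum_mul_conv_eq_toLinearMap₂'_catalecticant (b : Box (fun k => 2 * N k) → ℂ)
    (f g : Box N → ℂ) :
    ∑ β, b β * conv f g β = Matrix.toLinearMap₂' ℂ (catalecticant b) f g := by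
  simp only [toLinearMap₂'_catalecticant_apply, conv, Finset.mul_sum, mul_ite, mul_zero]
  rw [Finset.sum_comm]
  refine Finset.sum_congr rfl fun i _ => ?_
  rw [Finset.sum_comm]
  refine Finset.sum_congr rfl fun j _ => ?_
  rw [Finset.sum_ite_eq, if_pos (Finset.mem_univ _)]
  ring

end Catalecticant

/-- Let `A : Fin ℓ × box(N) → ℂ` have nonzero row space `U`,
and let `B(i,j) = b(i+j)` be catalectic. Then the `ℓ × ℓ` matrix `A B Aᵗ` has
rank at most 1 iff there is a codimension-one subspace `W ⊆ U` such that
`∑_β b(β) (w ⋆ u)(β) = 0` for all `w ∈ W` and `u ∈ U`. -/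
theorem rank_ABAt_le_one_iff {r : ℕ} (N : Fin r → ℕ) (ℓ : ℕ)
    (A : Fin ℓ × Box N → ℂ) (b : Box (fun k => 2 * N k) → ℂ)
    (U : Submodule ℂ (Box N → ℂ))
    (hU : U = Submodule.span ℂ (Set.range fun k : Fin ℓ => fun i : Box N => A (k, i)))
    (hU0 : U ≠ ⊥) :
    (Matrix.of fun k l : Fin ℓ =>
        ∑ i : Box N, ∑ j : Box N, A (k, i) * b (boxAdd i j) * A (l, j)).rank ≤ 1 ↔
      ∃ W : Submodule ℂ (Box N → ℂ), W ≤ U ∧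
        Module.finrank ℂ W + 1 = Module.finrank ℂ U ∧
        ∀ w ∈ W, ∀ u ∈ U,
          ∑ β : Box (fun k => 2 * N k), b β * conv w u β = 0 := by
  set Φ : (Box N → ℂ) →ₗ[ℂ] (Box N → ℂ) →ₗ[ℂ] ℂ :=
    Matrix.toLinearMap₂' ℂ (catalecticant b)
  have hgram : (Matrix.of fun k l : Fin ℓ =>
      ∑ i : Box N, ∑ j : Box N, A (k, i) * b (boxAdd i j) * A (l, j)) =
      Matrix.of fun k l => Φ (fun i => A (k, i)) (fun j => A (l, j)) := by
    simp only [Φ, toLinearMap₂'_catalecticant_apply]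
  rw [hgram, Matrix.rank_of_bilin_apply_eq_finrank_map, ← hU, finrank_map_le_one_iff _ hU0]
  simp only [LinearMap.le_ker_compl₂_subtype_iff, sum_mul_conv_eq_toLinearMap₂'_catalecticant,
    Φ]
end
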